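/- Upper bound on the smoothed class probability at a perturbed input (case ψ > ψ̃): Let x, x̃ ∈ X, let z★ be a longest common subsequence of x and x̃ with L := |z★|, let ψ, ψ̃ ∈ (0,1) with ψ > ψ̃, let f̄ : X → Y be any base classifier and y ∈ Y. Set μ := p_y(x; f̄, ψ) and let H★ := max{ H ∈ {0,…,L} : Σ_{i=H}^{L} B(L, ψ, i) ≥ μ } (this set is nonempty since Σ_{i=0}^{L} B(L, ψ, i) = 1 ≥ μ). Then p_y(x̃; f̄, ψ̃) ≤ (ψ̃^{|x̃|−L} / ψ^{|x|−L}) · ( Σ_{i=H★+1}^{L} B(L, ψ̃, i) + B(L, ψ̃, H★) · ⌈ (μ − Σ_{j=H★+1}^{L} B(L, ψ, j)) / B(L, ψ, H★) ⌉_{C(L,H★)^{−1}} ) + 1 − ψ̃^{|x̃|−L}. -/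

import Mathlib

/-- Apply a deletion indicator: keep the tokens at positions `i` with `ε i = true`, in order. -/
def applyDel {Ω : Type*} (x : List Ω) (ε : Fin x.length → Bool) : List Ω :=
  (List.finRange x.length).filterMap fun i => if ε i then some (x.get i) else none

/-- Number of retained tokens `|ε|`. -/
def retained {n : ℕ} (ε : Fin n → Bool) : ℕ :=
  (Finset.univ.filter fun i => ε i = true).card

/-- `q_ψ(ε|x) = ψ^{|x|-|ε|} (1-ψ)^{|ε|}`. -/
noncomputable def qdel {Ω : Type*} (ψ : ℝ) (x : List Ω) (ε : Fin x.length → Bool) : ℝ :=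
  ψ ^ (x.length - retained ε) * (1 - ψ) ^ (retained ε)

/-- The score `s_{f̄,ψ}(ε, x) = q_ψ(ε|x)·1[f̄(apply(x,ε)) = y]`. -/
noncomputable def score {Ω Y : Type*} [DecidableEq Y] (f : List Ω → Y) (y : Y) (ψ : ℝ)
    (x : List Ω) (ε : Fin x.length → Bool) : ℝ :=
  qdel ψ x ε * (if f (applyDel x ε) = y then 1 else 0)

/-- The smoothed class probability `p_y(x; f̄, ψ) = Σ_{ε ∈ E(x)} s_{f̄,ψ}(ε, x)`. -/
noncomputable def smoothedProb {Ω Y : Type*} [DecidableEq Y] (f : List Ω → Y) (y : Y)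
    (ψ : ℝ) (x : List Ω) : ℝ :=
  ∑ ε : Fin x.length → Bool, score f y ψ x ε

/-- `z` is a longest common subsequence of `x` and `x̃`. -/
def IsLCS {Ω : Type*} (z x xt : List Ω) : Prop :=
  z.Sublist x ∧ z.Sublist xt ∧ ∀ w : List Ω, w.Sublist x → w.Sublist xt → w.length ≤ z.length

/-- The binomial pmf `B(n, p, k) = C(n,k)·(1−p)^k·p^{n−k}`. -/
noncomputable def binomPMF (n : ℕ) (p : ℝ) (k : ℕ) : ℝ :=
  (n.choose k : ℝ) * (1 - p) ^ k * p ^ (n - k)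

/-- Gridded floor `⌊a⌋_v = v·⌊a/v⌋`. -/
noncomputable def gfloor (a v : ℝ) : ℝ := v * (⌊a / v⌋ : ℤ)

/-- Gridded ceiling `⌈a⌉_v = v·⌈a/v⌉`. -/
noncomputable def gceil (a v : ℝ) : ℝ := v * (⌈a / v⌉ : ℤ)

/-!
Embed the common subsequence `z★` into `x` and into `x̃` along order embeddings. A deletion
pattern of `z★` extends (deleting everything outside the embedding) to one of `x` with the same
output and the same number of retained tokens, and its weight gets multiplied by `ψ^{|x|-L}`.
Hence `ψ^{|x|-L} · p_y(z★; ψ) ≤ μ`, and, since the patterns of `x̃` that do not arise this way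
have total weight `1 - ψ̃^{|x̃|-L}`, also
`p_y(x̃; ψ̃) ≤ ψ̃^{|x̃|-L} · p_y(z★; ψ̃) + 1 - ψ̃^{|x̃|-L}`.
For `ψ̃ < ψ` the likelihood ratio `q_ψ̃ / q_ψ` of a pattern increases with its number of
retained tokens, so by the Neyman–Pearson argument the `ψ̃`-mass of any test of `ψ`-mass at most
`μ` is bounded by that of the threshold test accepting the patterns retaining more than `H★`
tokens and those retaining exactly `H★` with probability `c`, which exhausts `μ`.
Finally `c ≤ ⌈c⌉_v`.
-/

open Finset

section Patterns

variable {m n : ℕ}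

def extendPattern (e : Fin m ↪o Fin n) (δ : Fin m → Bool) : Fin n → Bool :=
  fun i => decide (∃ j, e j = i ∧ δ j = true)

lemma extendPattern_eq_true_iff (e : Fin m ↪o Fin n) (δ : Fin m → Bool) (i : Fin n) :
    extendPattern e δ i = true ↔ ∃ j, e j = i ∧ δ j = true :=
  decide_eq_true_iff

@[simp]
lemma extendPattern_apply (e : Fin m ↪o Fin n) (δ : Fin m → Bool) (j : Fin m) :
    extendPattern e δ (e j) = δ j := by
  rw [Bool.eq_iff_iff, extendPattern_eq_true_iff]
  simp

lemma extendPattern_injective (e : Fin m ↪o Fin n) : Function.Injective (extendPattern e) :=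
  fun δ δ' h => funext fun j => by simpa using congrFun h (e j)

lemma filter_finRange_extendPattern (e : Fin m ↪o Fin n) (δ : Fin m → Bool) :
    (List.finRange n).filter (extendPattern e δ) = ((List.finRange m).filter δ).map e := by
  have hsorted : ((List.finRange m).filter δ).Pairwise (· < ·) :=
    (List.pairwise_lt_finRange m).sublist List.filter_sublist
  refine List.Perm.eq_of_pairwise (fun a b _ _ h1 h2 => absurd h1 (asymm h2))
    ((List.pairwise_lt_finRange n).sublist List.filter_sublist)
    (List.pairwise_map.2 (hsorted.imp e.lt_iff_lt.2)) ?_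
  refine (List.perm_ext_iff_of_nodup ((List.nodup_finRange n).filter _)
    (((List.nodup_finRange m).filter _).map e.injective)).2 fun i => ?_
  simp [extendPattern_eq_true_iff, and_comm]

lemma retained_eq_length_filter (ε : Fin n → Bool) :
    retained ε = ((List.finRange n).filter ε).length := by
  rw [retained, Fin.univ_def]
  simp [Finset.filter]

lemma retained_extendPattern (e : Fin m ↪o Fin n) (δ : Fin m → Bool) :
    retained (extendPattern e δ) = retained δ := by
  rw [retained_eq_length_filter, retained_eq_length_filter, filter_finRange_extendPattern,
    List.length_map]

lemma retained_le (ε : Fin n → Bool) : retained ε ≤ n :=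
  (card_filter_le _ _).trans_eq (card_fin n)

lemma applyDel_eq_map_filter {Ω : Type*} (x : List Ω) (ε : Fin x.length → Bool) :
    applyDel x ε = ((List.finRange x.length).filter ε).map x.get := by
  rw [applyDel, ← List.filterMap_eq_map, List.filterMap_filter]
  congr 1

lemma applyDel_extendPattern {Ω : Type*} {x z : List Ω} (e : Fin z.length ↪o Fin x.length)
    (he : ∀ j, z.get j = x.get (e j)) (δ : Fin z.length → Bool) :
    applyDel x (extendPattern e δ) = applyDel z δ := by
  rw [applyDel_eq_map_filter, applyDel_eq_map_filter, filter_finRange_extendPattern,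
    List.map_map]
  exact List.map_congr_left fun j _ => (he j).symm

end Patterns

def bernoulliWeight (ψ : ℝ) (n k : ℕ) : ℝ := ψ ^ (n - k) * (1 - ψ) ^ k

lemma bernoulliWeight_nonneg {ψ : ℝ} (h0 : 0 ≤ ψ) (h1 : ψ ≤ 1) (n k : ℕ) :
    0 ≤ bernoulliWeight ψ n k :=
  mul_nonneg (pow_nonneg h0 _) (pow_nonneg (sub_nonneg.2 h1) _)

lemma binomPMF_eq (n : ℕ) (ψ : ℝ) (k : ℕ) :
    binomPMF n ψ k = n.choose k * bernoulliWeight ψ n k := by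
  rw [binomPMF, bernoulliWeight]
  ring

lemma sum_retained (n : ℕ) (G : ℕ → ℝ) :
    ∑ δ : Fin n → Bool, G (retained δ) = ∑ k ∈ range (n + 1), (n.choose k : ℝ) * G k := by
  let supportEquiv : (Fin n → Bool) ≃ Finset (Fin n) :=
    { toFun := fun δ => univ.filter fun i => δ i = true
      invFun := fun s i => decide (i ∈ s)
      left_inv := fun δ => by funext i; simp
      right_inv := fun s => by ext i; simp }
  rw [← Fintype.sum_equiv supportEquiv.symm (fun s => G s.card) _ fun s => ?_, ← powerset_univ,
    sum_powerset_apply_card, card_fin]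
  · simp [nsmul_eq_mul]
  · simp [supportEquiv, retained]

lemma sum_bernoulliWeight_mul (ψ : ℝ) (n : ℕ) (G : ℕ → ℝ) :
    ∑ δ : Fin n → Bool, bernoulliWeight ψ n (retained δ) * G (retained δ)
      = ∑ k ∈ range (n + 1), binomPMF n ψ k * G k := by
  rw [sum_retained n fun k => bernoulliWeight ψ n k * G k]
  exact sum_congr rfl fun k _ => by rw [binomPMF_eq, mul_assoc]

lemma sum_binomPMF (n : ℕ) (ψ : ℝ) : ∑ k ∈ range (n + 1), binomPMF n ψ k = 1 := by
  have := add_pow (1 - ψ) ψ n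
  rw [sub_add_cancel, one_pow] at this
  rw [this]
  exact sum_congr rfl fun k _ => by unfold binomPMF; ring

section Weights

variable {Ω Y : Type*} [DecidableEq Y]

lemma qdel_eq_bernoulliWeight (ψ : ℝ) (x : List Ω) (ε : Fin x.length → Bool) :
    qdel ψ x ε = bernoulliWeight ψ x.length (retained ε) :=
  rfl

lemma sum_qdel (ψ : ℝ) (x : List Ω) : ∑ ε, qdel ψ x ε = 1 := by
  simpa [qdel_eq_bernoulliWeight, sum_binomPMF] using
    sum_bernoulliWeight_mul ψ x.length fun _ => 1

lemma score_nonneg (f : List Ω → Y) (y : Y) {ψ : ℝ} (h0 : 0 ≤ ψ) (h1 : ψ ≤ 1) (x : List Ω)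
    (ε : Fin x.length → Bool) : 0 ≤ score f y ψ x ε :=
  mul_nonneg (bernoulliWeight_nonneg h0 h1 _ _) (by positivity)

lemma score_le_qdel (f : List Ω → Y) (y : Y) {ψ : ℝ} (h0 : 0 ≤ ψ) (h1 : ψ ≤ 1) (x : List Ω)
    (ε : Fin x.length → Bool) : score f y ψ x ε ≤ qdel ψ x ε := by
  have := bernoulliWeight_nonneg h0 h1 x.length (retained ε)
  rw [score, qdel_eq_bernoulliWeight]
  split_ifs <;> simp [this]

lemma qdel_extendPattern (ψ : ℝ) {x z : List Ω} (e : Fin z.length ↪o Fin x.length)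
    (δ : Fin z.length → Bool) :
    qdel ψ x (extendPattern e δ) = ψ ^ (x.length - z.length) * qdel ψ z δ := by
  have hlen : z.length ≤ x.length := by simpa using Fintype.card_le_of_embedding e.toEmbedding
  have hδ := retained_le δ
  rw [qdel, qdel, retained_extendPattern, ← mul_assoc, ← pow_add]
  congr 2
  omega

lemma sum_image_extendPattern_qdel (ψ : ℝ) {x z : List Ω} (e : Fin z.length ↪o Fin x.length) :
    ∑ ε ∈ univ.image (extendPattern e), qdel ψ x ε = ψ ^ (x.length - z.length) := by
  rw [sum_image fun δ _ δ' _ h => extendPattern_injective e h]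
  simp only [qdel_extendPattern, ← mul_sum, sum_qdel, mul_one]

lemma sum_image_extendPattern_score (f : List Ω → Y) (y : Y) (ψ : ℝ) {x z : List Ω}
    (e : Fin z.length ↪o Fin x.length) (he : ∀ j, z.get j = x.get (e j)) :
    ∑ ε ∈ univ.image (extendPattern e), score f y ψ x ε
      = ψ ^ (x.length - z.length) * smoothedProb f y ψ z := by
  rw [sum_image fun δ _ δ' _ h => extendPattern_injective e h, smoothedProb, mul_sum]
  refine sum_congr rfl fun δ _ => ?_
  rw [score, score, qdel_extendPattern, applyDel_extendPattern e he, mul_assoc]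

end Weights

section Sublist

variable {Ω Y : Type*} [DecidableEq Y] (f : List Ω → Y) (y : Y) {ψ : ℝ} {x z : List Ω}

lemma pow_mul_smoothedProb_le_of_sublist (hψ0 : 0 ≤ ψ) (hψ1 : ψ ≤ 1) (h : z.Sublist x) :
    ψ ^ (x.length - z.length) * smoothedProb f y ψ z ≤ smoothedProb f y ψ x := by
  obtain ⟨e, he⟩ := List.sublist_iff_exists_fin_orderEmbedding_get_eq.1 h
  rw [← sum_image_extendPattern_score f y ψ e he]
  exact sum_le_sum_of_subset_of_nonneg (subset_univ _)
    fun ε _ _ => score_nonneg f y hψ0 hψ1 x ε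

lemma smoothedProb_le_of_sublist (hψ0 : 0 ≤ ψ) (hψ1 : ψ ≤ 1) (h : z.Sublist x) :
    smoothedProb f y ψ x
      ≤ ψ ^ (x.length - z.length) * smoothedProb f y ψ z + 1 - ψ ^ (x.length - z.length) := by
  obtain ⟨e, he⟩ := List.sublist_iff_exists_fin_orderEmbedding_get_eq.1 h
  set patterns := univ.image (extendPattern e)
  have hrest : ∑ ε ∈ univ \ patterns, score f y ψ x ε ≤ ∑ ε ∈ univ \ patterns, qdel ψ x ε :=
    sum_le_sum fun ε _ => score_le_qdel f y hψ0 hψ1 x ε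
  have hsplit_score := sum_sdiff (subset_univ patterns) (f := score f y ψ x)
  have hsplit_qdel := sum_sdiff (subset_univ patterns) (f := qdel ψ x)
  rw [sum_qdel, sum_image_extendPattern_qdel] at hsplit_qdel
  rw [sum_image_extendPattern_score f y ψ e he] at hsplit_score
  rw [smoothedProb]
  linarith

end Sublist

section NeymanPearson

lemma sum_mul_le_of_likelihoodRatioTest {ι : Type*} (s : Finset ι) {P Q t T : ι → ℝ} {a b : ℝ}
    (ha : 0 < a) (hb : 0 ≤ b) (htest : ∀ i ∈ s, (t i - T i) * (a * Q i - b * P i) ≤ 0)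
    (hsize : ∑ i ∈ s, P i * t i ≤ ∑ i ∈ s, P i * T i) :
    ∑ i ∈ s, Q i * t i ≤ ∑ i ∈ s, Q i * T i := by
  have key : a * (∑ i ∈ s, Q i * t i - ∑ i ∈ s, Q i * T i)
      - b * (∑ i ∈ s, P i * t i - ∑ i ∈ s, P i * T i)
      = ∑ i ∈ s, (t i - T i) * (a * Q i - b * P i) := by
    simp only [mul_sub, mul_sum, ← sum_sub_distrib]
    exact sum_congr rfl fun i _ => by ring
  nlinarith [sum_nonpos htest, mul_nonneg hb (sub_nonneg.2 hsize)]

lemma bernoulliWeight_mul_le_of_le {ψ ψt : ℝ} (hψ1 : ψ ≤ 1) (hψt0 : 0 ≤ ψt) (hle : ψt ≤ ψ)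
    {n a b : ℕ} (hab : a ≤ b) (hbn : b ≤ n) :
    bernoulliWeight ψt n a * bernoulliWeight ψ n b
      ≤ bernoulliWeight ψt n b * bernoulliWeight ψ n a := by
  obtain ⟨d, rfl⟩ := Nat.exists_eq_add_of_le hab
  obtain ⟨r, rfl⟩ := Nat.exists_eq_add_of_le hbn
  have hsplit : a + d + r - a = r + d := by omega
  simp only [bernoulliWeight, hsplit, Nat.add_sub_cancel_left, pow_add]
  have hcommon : 0 ≤ ψt ^ r * (1 - ψt) ^ a * (ψ ^ r * (1 - ψ) ^ a) := by
    have := hψt0.trans hle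
    have := hle.trans hψ1
    positivity
  have hstep : (ψt * (1 - ψ)) ^ d ≤ ((1 - ψt) * ψ) ^ d :=
    pow_le_pow_left₀ (mul_nonneg hψt0 (by linarith)) (by nlinarith) d
  rw [mul_pow, mul_pow] at hstep
  nlinarith [mul_le_mul_of_nonneg_left hstep hcommon]

def thresholdTest (H : ℕ) (c : ℝ) (k : ℕ) : ℝ := if H < k then 1 else if k = H then c else 0

lemma sum_binomPMF_mul_thresholdTest (ψ c : ℝ) {n H : ℕ} (hH : H ≤ n) :
    ∑ k ∈ range (n + 1), binomPMF n ψ k * thresholdTest H c k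
      = ∑ k ∈ Icc (H + 1) n, binomPMF n ψ k + binomPMF n ψ H * c := by
  simp only [thresholdTest, mul_ite, mul_one, mul_zero, sum_ite, sum_const_zero, add_zero]
  have htail : (range (n + 1)).filter (H < ·) = Icc (H + 1) n := by
    ext k
    simp only [mem_filter, mem_range, mem_Icc]
    omega
  have hsingle : ((range (n + 1)).filter (¬H < ·)).filter (· = H) = {H} := by
    ext k
    simp only [mem_filter, mem_range, mem_singleton]
    omega
  rw [htail, hsingle, sum_singleton]

lemma sub_thresholdTest_mul_nonpos {ψ ψt : ℝ} (hψ1 : ψ ≤ 1) (hψt0 : 0 ≤ ψt) (hle : ψt ≤ ψ)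
    {n H k : ℕ} (hk : k ≤ n) (hH : H ≤ n) (c : ℝ) {s : ℝ}
    (hs0 : 0 ≤ s) (hs1 : s ≤ 1) :
    (s - thresholdTest H c k)
      * (bernoulliWeight ψ n H * bernoulliWeight ψt n k
        - bernoulliWeight ψt n H * bernoulliWeight ψ n k) ≤ 0 := by
  rcases lt_trichotomy k H with hlt | rfl | hgt
  · have := bernoulliWeight_mul_le_of_le hψ1 hψt0 hle hlt.le hH
    rw [thresholdTest, if_neg (by omega), if_neg hlt.ne]
    nlinarith
  · rw [mul_comm (bernoulliWeight ψ n k), sub_self, mul_zero]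
  · have := bernoulliWeight_mul_le_of_le hψ1 hψt0 hle hgt.le hk
    rw [thresholdTest, if_pos hgt]
    nlinarith

theorem sum_bernoulliWeight_mul_le {ψ ψt μ : ℝ} (hψ0 : 0 < ψ) (hψ1 : ψ < 1) (hψt0 : 0 ≤ ψt)
    (hle : ψt ≤ ψ) {n H : ℕ} (hH : H ≤ n)
    (t : (Fin n → Bool) → ℝ) (ht0 : ∀ δ, 0 ≤ t δ) (ht1 : ∀ δ, t δ ≤ 1)
    (hμ : ∑ δ, bernoulliWeight ψ n (retained δ) * t δ ≤ μ) :
    ∑ δ, bernoulliWeight ψt n (retained δ) * t δ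
      ≤ ∑ k ∈ Icc (H + 1) n, binomPMF n ψt k + binomPMF n ψt H
        * ((μ - ∑ k ∈ Icc (H + 1) n, binomPMF n ψ k) / binomPMF n ψ H) := by
  have hweight : 0 < bernoulliWeight ψ n H :=
    mul_pos (pow_pos hψ0 _) (pow_pos (sub_pos.2 hψ1) _)
  have hB : 0 < binomPMF n ψ H := by
    rw [binomPMF_eq]
    exact mul_pos (by exact_mod_cast Nat.choose_pos hH) hweight
  set c := (μ - ∑ k ∈ Icc (H + 1) n, binomPMF n ψ k) / binomPMF n ψ H
  have hsize : ∑ k ∈ range (n + 1), binomPMF n ψ k * thresholdTest H c k = μ := by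
    rw [sum_binomPMF_mul_thresholdTest ψ c hH, mul_div_cancel₀ _ hB.ne']
    ring
  rw [← sum_binomPMF_mul_thresholdTest ψt c hH, ← sum_bernoulliWeight_mul]
  refine sum_mul_le_of_likelihoodRatioTest univ hweight
    (bernoulliWeight_nonneg hψt0 (hle.trans hψ1.le) n H)
    (fun δ _ => sub_thresholdTest_mul_nonpos hψ1.le hψt0 hle (retained_le δ) hH c (ht0 δ)
      (ht1 δ)) ?_
  rwa [sum_bernoulliWeight_mul, hsize]

end NeymanPearson

lemma le_gceil (a : ℝ) {v : ℝ} (hv : 0 < v) : a ≤ gceil a v := by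
  rw [gceil, ← div_le_iff₀' hv]
  exact Int.le_ceil _

/-- upper bound on the smoothed class probability at a perturbed input,
case `ψ > ψ̃`. -/
theorem stmt14 {Ω Y : Type*} [DecidableEq Y] (x xt zs : List Ω)
    (hz : IsLCS zs x xt) (L : ℕ) (hL : L = zs.length)
    (ψ ψt : ℝ) (hψ : ψ ∈ Set.Ioo (0 : ℝ) 1) (hψt : ψt ∈ Set.Ioo (0 : ℝ) 1)
    (hgt : ψ > ψt)
    (f : List Ω → Y) (y : Y)
    (μ : ℝ) (hμ : μ = smoothedProb f y ψ x)
    (H : ℕ)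
    (hH : H = sSup {h | h ≤ L ∧ μ ≤ ∑ i ∈ Finset.Icc h L, binomPMF L ψ i}) :
    smoothedProb f y ψt xt ≤
      ψt ^ (xt.length - L) / ψ ^ (x.length - L) *
        (∑ i ∈ Finset.Icc (H + 1) L, binomPMF L ψt i +
          binomPMF L ψt H *
            gceil ((μ - ∑ j ∈ Finset.Icc (H + 1) L, binomPMF L ψ j) / binomPMF L ψ H)
              ((L.choose H : ℝ)⁻¹)) +
      1 - ψt ^ (xt.length - L) := by
  obtain ⟨hzx, hzxt, -⟩ := hz
  obtain ⟨hψ0, hψ1⟩ := hψ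
  obtain ⟨hψt0, hψt1⟩ := hψt
  subst hL
  have hHL : H ≤ zs.length := hH ▸ csSup_le' fun h hh => hh.1
  set a := ψ ^ (x.length - zs.length)
  have ha : 0 < a := pow_pos hψ0 _
  set t : (Fin zs.length → Bool) → ℝ := fun δ => a * if f (applyDel zs δ) = y then 1 else 0
  have hscaled (ψ' : ℝ) :
      ∑ δ, bernoulliWeight ψ' zs.length (retained δ) * t δ = a * smoothedProb f y ψ' zs := by
    rw [smoothedProb, mul_sum]
    exact sum_congr rfl fun δ _ => by rw [score, qdel_eq_bernoulliWeight]; ring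
  have hNP := sum_bernoulliWeight_mul_le (μ := μ) hψ0 hψ1 hψt0.le hgt.le hHL t
    (fun δ => by positivity)
    (fun δ => mul_le_one₀ (pow_le_one₀ hψ0.le hψ1.le) (by positivity) (by split_ifs <;> norm_num))
    (by rw [hscaled, hμ]; exact pow_mul_smoothedProb_le_of_sublist f y hψ0.le hψ1.le hzx)
  rw [hscaled] at hNP
  calc smoothedProb f y ψt xt
      ≤ ψt ^ (xt.length - zs.length) * smoothedProb f y ψt zs + 1
        - ψt ^ (xt.length - zs.length) :=
        smoothedProb_le_of_sublist f y hψt0.le hψt1.le hzxt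
    _ = ψt ^ (xt.length - zs.length) / a * (a * smoothedProb f y ψt zs) + 1
        - ψt ^ (xt.length - zs.length) := by
        field_simp
    _ ≤ _ := by
        gcongr _ * ?_ + _ - _
        refine hNP.trans ?_
        gcongr
        · rw [binomPMF_eq]
          exact mul_nonneg (Nat.cast_nonneg _) (bernoulliWeight_nonneg hψt0.le hψt1.le _ _)
        · exact le_gceil _ (by have := Nat.choose_pos hHL; positivity)
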